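/- arXiv:2411.05464 — 3 statements merged into one kernel-verified Lean document; each statement's English description precedes it below -/
import Mathlib

section
/- Let X and Y be finite sets, A and C be discrete sets, and φ_a: X → A, φ_b: Y → C be maps; let φ = φ_a × φ_b. Let μ be a measure on X and ν a measure on Y with ‖μ‖ ≤ ‖ν‖. Then the pushforward under φ of the set of (unbalanced) couplings between μ and ν equals the set of (unbalanced) couplings between (φ_a)_*μ and (φ_b)_*ν; that is, {φ_*γ : γ ∈ Γ(μ,ν)} = Γ((φ_a)_*μ, (φ_b)_*ν). -/
/-!
A coupling `κ` of the pushforwards lifts back along `φ`: spread each atom `κ {(a, c)}` over the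
fibre rectangle `φa ⁻¹' {a} × φb ⁻¹' {c}` as `κ {(a, c)}` times the product of the conditional
measures `μ[|φa ⁻¹' {a}]` and `ν[|φb ⁻¹' {c}]`. Since `X` and `Y` are finite, `κ` is carried by
finitely many atoms. Its atoms never exceed the mass of the corresponding fibres, so the lift maps
back onto `κ`, and summing the conditional measures against the fibre masses (total probability)
recovers `μ` as first marginal and at most `ν` as second.
-/

open MeasureTheory ProbabilityTheory Measure
open scoped ENNReal

section Fibers

variable {α β : Type*} [MeasurableSpace α] [MeasurableSpace β] [MeasurableSingletonClass β]
  {f : α → β} {μ : Measure α}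

lemma sum_restrict_preimage_singleton (hf : Measurable f) (μ : Measure α) (s : Finset β) :
    ∑ b ∈ s, μ.restrict (f ⁻¹' {b}) = μ.restrict (f ⁻¹' s) := by
  rw [← Set.biUnion_preimage_singleton, Finset.set_biUnion_coe,
    restrict_biUnion_finset ((Set.pairwiseDisjoint_fiber f _).subset (Set.subset_univ _))
      fun b => hf (measurableSet_singleton b)]
  exact (sum_coe_finset s fun b => μ.restrict (f ⁻¹' {b})).symm

lemma sum_smul_dirac_eq_restrict (κ : Measure β) (s : Finset β) :
    ∑ b ∈ s, κ {b} • dirac b = κ.restrict s := by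
  simpa [restrict_singleton] using sum_restrict_preimage_singleton measurable_id κ s

lemma smul_cond_eq_restrict {s : Set α} (hs : μ s ≠ ∞) : μ s • μ[|s] = μ.restrict s := by
  rcases eq_or_ne (μ s) 0 with h | h
  · simp [h, restrict_eq_zero.mpr h]
  · rw [ProbabilityTheory.cond, smul_smul, ENNReal.mul_inv_cancel h hs, one_smul]

lemma sum_smul_cond_preimage_singleton [IsFiniteMeasure μ] (hf : Measurable f) (s : Finset β) :
    ∑ b ∈ s, μ (f ⁻¹' {b}) • μ[|f ⁻¹' {b}] = μ.restrict (f ⁻¹' s) := by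
  simp_rw [smul_cond_eq_restrict (measure_ne_top μ _)]
  exact sum_restrict_preimage_singleton hf μ s

lemma map_cond_preimage_singleton [IsFiniteMeasure μ] (hf : Measurable f) {b : β}
    (h : μ (f ⁻¹' {b}) ≠ 0) : (μ[|f ⁻¹' {b}]).map f = dirac b := by
  rw [ProbabilityTheory.cond, Measure.map_smul, ← restrict_map hf (measurableSet_singleton b),
    restrict_singleton, map_apply hf (measurableSet_singleton b), smul_smul,
    ENNReal.inv_mul_cancel h (measure_ne_top μ _), one_smul]

lemma mul_cond_apply_univ_of_le [IsFiniteMeasure μ] {s : Set α} {c : ℝ≥0∞} (hc : c ≤ μ s) :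
    c * μ[|s] Set.univ = c := by
  rcases eq_or_ne c 0 with rfl | hc0
  · exact zero_mul _
  have := cond_isProbabilityMeasure (μ := μ) (pos_of_ne_zero hc0 |>.trans_le hc).ne'
  rw [measure_univ, mul_one]

lemma measure_singleton_le_of_map_le {γ : Type*} [MeasurableSpace γ] {g : γ → β} {κ : Measure γ}
    (hg : Measurable g) (hf : Measurable f) (h : κ.map g ≤ μ.map f) (p : γ) :
    κ {p} ≤ μ (f ⁻¹' {g p}) :=
  calc κ {p} ≤ κ (g ⁻¹' {g p}) := measure_mono (Set.singleton_subset_iff.mpr rfl)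
    _ = κ.map g {g p} := (map_apply hg (measurableSet_singleton _)).symm
    _ ≤ μ.map f {g p} := h _
    _ = μ (f ⁻¹' {g p}) := map_apply hf (measurableSet_singleton _)

end Fibers

lemma ae_mem_range_of_map_le {α β γ : Type*} [MeasurableSpace α] [MeasurableSpace β]
    [MeasurableSpace γ] {g : γ → α} {κ : Measure γ} (hg : Measurable g) {f : β → α}
    (hr : MeasurableSet (Set.range f)) {ν : Measure β} (h : κ.map g ≤ ν.map f) :
    ∀ᵐ p ∂κ, g p ∈ Set.range f :=
  ae_of_ae_map hg.aemeasurable <| (absolutelyContinuous_of_le h).ae_le (ae_map_mem_range f hr ν)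

lemma sum_smul_comp_eq_sum_map_smul {α β M : Type*} [MeasurableSpace α] [MeasurableSpace β]
    [MeasurableSingletonClass α] [MeasurableSingletonClass β] [AddCommMonoid M] [Module ℝ≥0∞ M]
    [DecidableEq β] {κ : Measure α} {S : Finset α} (hS : ∀ᵐ p ∂κ, p ∈ S) {g : α → β}
    (hg : Measurable g) (K : β → M) :
    ∑ p ∈ S, κ {p} • K (g p) = ∑ b ∈ S.image g, κ.map g {b} • K b := by
  have hfiber (b : β) : κ.map g {b} = ∑ p ∈ S with g p = b, κ {p} := by
    rw [map_apply hg (measurableSet_singleton b), sum_measure_singleton,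
      ← measure_inter_conull (t := S) (ae_iff.mp hS)]
    congr 1
    ext p
    simp [and_comm]
  refine (Finset.sum_image' _ fun p _ => ?_).symm
  rw [hfiber, Finset.sum_smul]
  exact Finset.sum_congr rfl fun q hq => by rw [(Finset.mem_filter.mp hq).2]

section Lift

variable {X Y A C : Type*} [MeasurableSpace X] [MeasurableSpace Y] [MeasurableSpace A]
  [MeasurableSpace C] [MeasurableSingletonClass A] [MeasurableSingletonClass C]
  {φa : X → A} {φb : Y → C} {μ : Measure X} {ν : Measure Y} {κ : Measure (A × C)}
  {S : Finset (A × C)}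

noncomputable def fiberwiseLift (φa : X → A) (φb : Y → C) (μ : Measure X) (ν : Measure Y)
    (κ : Measure (A × C)) (S : Finset (A × C)) : Measure (X × Y) :=
  ∑ p ∈ S, κ {p} • (μ[|φa ⁻¹' {p.1}]).prod (ν[|φb ⁻¹' {p.2}])

lemma map_fst_fiberwiseLift [IsFiniteMeasure μ] [IsFiniteMeasure ν] (hφa : Measurable φa)
    (hφb : Measurable φb) (hS : ∀ᵐ p ∂κ, p ∈ S) (h₁ : κ.map Prod.fst = μ.map φa)
    (h₂ : κ.map Prod.snd ≤ ν.map φb) :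
    (fiberwiseLift φa φb μ ν κ S).map Prod.fst = μ := by
  classical
  have hμS : ∀ᵐ x ∂μ, x ∈ φa ⁻¹' ↑(S.image Prod.fst) := by
    have hκS : ∀ᵐ a ∂κ.map Prod.fst, a ∈ (S.image Prod.fst : Set A) :=
      (ae_map_iff measurable_fst.aemeasurable (Finset.measurableSet _)).mpr <| by
        filter_upwards [hS] with p hp using Finset.mem_image_of_mem _ hp
    exact ae_of_ae_map hφa.aemeasurable (h₁ ▸ hκS)
  calc (fiberwiseLift φa φb μ ν κ S).map Prod.fst
      = ∑ p ∈ S, κ {p} • μ[|φa ⁻¹' {p.1}] := by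
        rw [fiberwiseLift, Measure.map_finset_sum measurable_fst.aemeasurable]
        refine Finset.sum_congr rfl fun p _ => ?_
        rw [Measure.map_smul, map_fst_prod, smul_smul,
          mul_cond_apply_univ_of_le (measure_singleton_le_of_map_le measurable_snd hφb h₂ p)]
    _ = ∑ a ∈ S.image Prod.fst, μ (φa ⁻¹' {a}) • μ[|φa ⁻¹' {a}] := by
        rw [sum_smul_comp_eq_sum_map_smul hS measurable_fst (fun a => μ[|φa ⁻¹' {a}]), h₁]
        simp_rw [map_apply hφa (measurableSet_singleton _)]
    _ = μ := by
        rw [sum_smul_cond_preimage_singleton hφa, restrict_eq_self_of_ae_mem hμS]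

lemma map_snd_fiberwiseLift_le [IsFiniteMeasure ν] (hφb : Measurable φb) (hS : ∀ᵐ p ∂κ, p ∈ S)
    (h₂ : κ.map Prod.snd ≤ ν.map φb) :
    (fiberwiseLift φa φb μ ν κ S).map Prod.snd ≤ ν := by
  classical
  calc (fiberwiseLift φa φb μ ν κ S).map Prod.snd
      = ∑ p ∈ S, (κ {p} * μ[|φa ⁻¹' {p.1}] Set.univ) • ν[|φb ⁻¹' {p.2}] := by
        rw [fiberwiseLift, Measure.map_finset_sum measurable_snd.aemeasurable]
        refine Finset.sum_congr rfl fun p _ => ?_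
        rw [Measure.map_smul, map_snd_prod, smul_smul]
    _ ≤ ∑ p ∈ S, κ {p} • ν[|φb ⁻¹' {p.2}] :=
        Finset.sum_le_sum fun p _ =>
          IsOrderedSMul.smul_le_smul_right _ _ (mul_le_of_le_one_right' prob_le_one) _
    _ = ∑ c ∈ S.image Prod.snd, κ.map Prod.snd {c} • ν[|φb ⁻¹' {c}] :=
        sum_smul_comp_eq_sum_map_smul hS measurable_snd (fun c => ν[|φb ⁻¹' {c}])
    _ ≤ ∑ c ∈ S.image Prod.snd, ν (φb ⁻¹' {c}) • ν[|φb ⁻¹' {c}] :=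
        Finset.sum_le_sum fun c _ => IsOrderedSMul.smul_le_smul_right _ _
          ((h₂ {c}).trans_eq (map_apply hφb (measurableSet_singleton c))) _
    _ ≤ ν := by
        rw [sum_smul_cond_preimage_singleton hφb]
        exact restrict_le_self

lemma map_prodMap_fiberwiseLift [IsFiniteMeasure μ] [IsFiniteMeasure ν] (hφa : Measurable φa)
    (hφb : Measurable φb) (hS : ∀ᵐ p ∂κ, p ∈ S) (h₁ : κ.map Prod.fst = μ.map φa)
    (h₂ : κ.map Prod.snd ≤ ν.map φb) :
    (fiberwiseLift φa φb μ ν κ S).map (Prod.map φa φb) = κ := by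
  calc (fiberwiseLift φa φb μ ν κ S).map (Prod.map φa φb)
      = ∑ p ∈ S, κ {p} • dirac p := by
        rw [fiberwiseLift, Measure.map_finset_sum (hφa.prodMap hφb).aemeasurable]
        refine Finset.sum_congr rfl fun p _ => ?_
        rcases eq_or_ne (κ {p}) 0 with hp | hp
        · simp [hp]
        have hμp := measure_singleton_le_of_map_le measurable_fst hφa h₁.le p
        have hνp := measure_singleton_le_of_map_le measurable_snd hφb h₂ p
        rw [Measure.map_smul, ← map_prod_map _ _ hφa hφb,
          map_cond_preimage_singleton hφa (ne_bot_of_le_ne_bot hp hμp),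
          map_cond_preimage_singleton hφb (ne_bot_of_le_ne_bot hp hνp), dirac_prod_dirac]
    _ = κ := by rw [sum_smul_dirac_eq_restrict, restrict_eq_self_of_ae_mem hS]

end Lift

theorem pushforward_couplings_general {X Y A C : Type*} [Fintype X] [Fintype Y]
    [MeasurableSpace X] [MeasurableSpace Y] [MeasurableSpace A] [MeasurableSpace C]
    [MeasurableSingletonClass A] [MeasurableSingletonClass C]
    (φa : X → A) (φb : Y → C) (hφa : Measurable φa) (hφb : Measurable φb)
    (μ : Measure X) (ν : Measure Y) [IsFiniteMeasure μ] [IsFiniteMeasure ν] :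
    (fun γ : Measure (X × Y) => γ.map (Prod.map φa φb)) ''
        {γ : Measure (X × Y) | γ.map Prod.fst = μ ∧ γ.map Prod.snd ≤ ν} =
      {γ : Measure (A × C) | γ.map Prod.fst = μ.map φa ∧ γ.map Prod.snd ≤ ν.map φb} := by
  ext κ
  constructor
  · rintro ⟨γ, ⟨h₁, h₂⟩, rfl⟩
    refine ⟨?_, ?_⟩
    · rw [map_map measurable_fst (hφa.prodMap hφb), Prod.map_fst', ← map_map hφa measurable_fst,
        h₁]
    · rw [map_map measurable_snd (hφa.prodMap hφb), Prod.map_snd', ← map_map hφb measurable_snd]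
      exact map_mono h₂ hφb
  · rintro ⟨h₁, h₂⟩
    set S := (Set.finite_range (Prod.map φa φb)).toFinset
    have hS : ∀ᵐ p ∂κ, p ∈ S := by
      filter_upwards [ae_mem_range_of_map_le measurable_fst (Set.finite_range φa).measurableSet
        h₁.le, ae_mem_range_of_map_le measurable_snd (Set.finite_range φb).measurableSet h₂]
        with p hpa hpb
      simpa [S, Set.range_prodMap] using ⟨hpa, hpb⟩
    exact ⟨fiberwiseLift φa φb μ ν κ S,
      ⟨map_fst_fiberwiseLift hφa hφb hS h₁ h₂, map_snd_fiberwiseLift_le hφb hS h₂⟩,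
      map_prodMap_fiberwiseLift hφa hφb hS h₁ h₂⟩

/-- Pushforward of unbalanced couplings: for finite `X`, `Y`, discrete `A`, `C`, maps
`φ_a : X → A`, `φ_b : Y → C` and measures `μ` on `X`, `ν` on `Y` with `‖μ‖ ≤ ‖ν‖`,
the pushforward under `φ = φ_a × φ_b` of the set of unbalanced couplings `Γ(μ,ν)`
equals `Γ((φ_a)_*μ, (φ_b)_*ν)`. -/
theorem pushforward_couplings {X Y A C : Type*} [Fintype X] [Fintype Y]
    [MeasurableSpace X] [MeasurableSpace Y] [MeasurableSpace A] [MeasurableSpace C]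
    [MeasurableSingletonClass A] [MeasurableSingletonClass C]
    (φa : X → A) (φb : Y → C) (hφa : Measurable φa) (hφb : Measurable φb)
    (μ : Measure X) (ν : Measure Y) [IsFiniteMeasure μ] [IsFiniteMeasure ν]
    (hm : μ Set.univ ≤ ν Set.univ) :
    (fun γ : Measure (X × Y) => γ.map (Prod.map φa φb)) ''
        {γ : Measure (X × Y) | γ.map Prod.fst = μ ∧ γ.map Prod.snd ≤ ν} =
      {γ : Measure (A × C) | γ.map Prod.fst = μ.map φa ∧ γ.map Prod.snd ≤ ν.map φb} :=
  pushforward_couplings_general φa φb hφa hφb μ ν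
end

section
/- Let X, Y be finite metric spaces, (Z, d_Z) a complete separable metric space, φ_X: X → Z and φ_Y: Y → Z measurable, and μ_X ∈ M_{≤1}(X), μ_Y ∈ M_{≤1}(Y). Then OT_{d_Z}((φ_X)_*μ_X, (φ_Y)_*μ_Y) = inf over couplings γ ∈ Γ(μ_X, μ_Y) of ∫_{X×Y} d_Z(φ_X(x), φ_Y(y)) dγ(x,y) (plus the mass-difference term |‖μ_X‖ − ‖μ_Y‖|). -/
open MeasureTheory
open scoped ENNReal

/-- Unbalanced optimal transport distance (extended-real valued). -/
noncomputable def UOTe {α : Type*} [MeasurableSpace α] (d : α → α → ℝ) (μ ν : Measure α) :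
    ℝ≥0∞ :=
  (if μ Set.univ ≤ ν Set.univ then
      ⨅ γ ∈ {γ : Measure (α × α) | γ.map Prod.fst = μ ∧ γ.map Prod.snd ≤ ν},
        ∫⁻ q, ENNReal.ofReal (d q.1 q.2) ∂γ
    else
      ⨅ γ ∈ {γ : Measure (α × α) | γ.map Prod.fst = ν ∧ γ.map Prod.snd ≤ μ},
        ∫⁻ q, ENNReal.ofReal (d q.1 q.2) ∂γ)
  + ((μ Set.univ - ν Set.univ) + (ν Set.univ - μ Set.univ))

/-! Pushing a coupling of `μX`, `μY` forward along `φX × φY` gives a coupling of the pushforwards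
with the same cost. Conversely, as `φX` and `φY` take finitely many values, a coupling `γ` of the
pushforwards is described by the masses `γ {(z, w)}`; spreading each of them over the fibre product
`φX⁻¹{z} × φY⁻¹{w}` proportionally to `μX ⊗ μY` gives a coupling of `μX`, `μY` whose cost is the
part of the cost of `γ` carried by the finitely many atoms. -/

open Set

lemma ENNReal.mul_inv_mul_cancel_of_le {a b : ℝ≥0∞} (hab : a ≤ b) (hb : b ≠ ∞) :
    a * b⁻¹ * b = a := by
  rcases eq_or_ne b 0 with rfl | hb0
  · simp [nonpos_iff_eq_zero.1 hab]
  · rw [mul_assoc, ENNReal.inv_mul_cancel hb0 hb, mul_one]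

lemma MeasureTheory.Measure.map_fst_map_prodMap {α β γ δ : Type*} [MeasurableSpace α]
    [MeasurableSpace β] [MeasurableSpace γ] [MeasurableSpace δ] {μ : Measure (α × β)}
    {f : α → γ} {g : β → δ} (hf : Measurable f) (hg : Measurable g) :
    (μ.map (Prod.map f g)).map Prod.fst = (μ.map Prod.fst).map f := by
  rw [Measure.map_map measurable_fst (hf.prodMap hg), Measure.map_map hf measurable_fst]
  rfl

lemma MeasureTheory.Measure.map_snd_map_prodMap {α β γ δ : Type*} [MeasurableSpace α]
    [MeasurableSpace β] [MeasurableSpace γ] [MeasurableSpace δ] {μ : Measure (α × β)}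
    {f : α → γ} {g : β → δ} (hf : Measurable f) (hg : Measurable g) :
    (μ.map (Prod.map f g)).map Prod.snd = (μ.map Prod.snd).map g := by
  rw [Measure.map_map measurable_snd (hf.prodMap hg), Measure.map_map hg measurable_snd]
  rfl

section Fibres

variable {X Z : Type*} [MeasurableSpace X] [MeasurableSpace Z] [MeasurableSingletonClass Z]

lemma sum_measure_inter_preimage_singleton (μ : Measure X) {f : X → Z} (hf : Measurable f)
    (S : Finset Z) (s : Set X) : ∑ z ∈ S, μ (f ⁻¹' {z} ∩ s) = μ (f ⁻¹' S ∩ s) := by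
  simpa only [Measure.restrict_apply (hf (measurableSet_singleton _)),
    Measure.restrict_apply (hf S.measurableSet)] using
    sum_measure_preimage_singleton (μ := μ.restrict s) S fun z _ ↦ hf (measurableSet_singleton z)

lemma sum_measure_inter_preimage_singleton_of_range_subset (μ : Measure X) {f : X → Z}
    (hf : Measurable f) {S : Finset Z} (hS : range f ⊆ S) (s : Set X) :
    ∑ z ∈ S, μ (f ⁻¹' {z} ∩ s) = μ s := by
  rw [sum_measure_inter_preimage_singleton μ hf, preimage_eq_univ_iff.2 hS, univ_inter]

end Fibres

noncomputable def gluedMeasure {X Y Z : Type*} [MeasurableSpace X] [MeasurableSpace Y]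
    (μX : Measure X) (μY : Measure Y) (φX : X → Z) (φY : Y → Z) (S T : Finset Z)
    (c : Z → Z → ℝ≥0∞) : Measure (X × Y) :=
  ∑ z ∈ S, ∑ w ∈ T, (c z w * (μX (φX ⁻¹' {z}))⁻¹ * (μY (φY ⁻¹' {w}))⁻¹) •
    (μX.restrict (φX ⁻¹' {z})).prod (μY.restrict (φY ⁻¹' {w}))

section Gluing

variable {X Y Z : Type*} [MeasurableSpace X] [MeasurableSpace Y] [MeasurableSpace Z]
  [MeasurableSingletonClass Z] {μX : Measure X} {μY : Measure Y} {φX : X → Z} {φY : Y → Z}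
  {S T : Finset Z} {c : Z → Z → ℝ≥0∞}

lemma gluedMeasure_apply_prod [SFinite μY] (hφX : Measurable φX) (hφY : Measurable φY)
    (s : Set X) (t : Set Y) :
    gluedMeasure μX μY φX φY S T c (s ×ˢ t) = ∑ z ∈ S, ∑ w ∈ T,
      c z w * (μX (φX ⁻¹' {z}))⁻¹ * (μY (φY ⁻¹' {w}))⁻¹ *
        (μX (s ∩ φX ⁻¹' {z}) * μY (t ∩ φY ⁻¹' {w})) := by
  simp only [gluedMeasure, Measure.finsetSum_apply, Measure.smul_apply, smul_eq_mul,
    Measure.prod_prod, Measure.restrict_apply' (hφX (measurableSet_singleton _)),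
    Measure.restrict_apply' (hφY (measurableSet_singleton _))]

variable [IsFiniteMeasure μX] [IsFiniteMeasure μY]

lemma map_fst_gluedMeasure (hφX : Measurable φX) (hφY : Measurable φY) (hS : range φX ⊆ S)
    (hrow : ∀ z ∈ S, ∑ w ∈ T, c z w = μX (φX ⁻¹' {z}))
    (hcb : ∀ z w, c z w ≤ μY (φY ⁻¹' {w})) :
    (gluedMeasure μX μY φX φY S T c).map Prod.fst = μX := by
  ext s hs
  rw [Measure.map_apply measurable_fst hs, ← prod_univ, gluedMeasure_apply_prod hφX hφY,
    ← sum_measure_inter_preimage_singleton_of_range_subset μX hφX hS s]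
  refine Finset.sum_congr rfl fun z hz ↦ ?_
  simp only [univ_inter]
  calc ∑ w ∈ T, c z w * (μX (φX ⁻¹' {z}))⁻¹ * (μY (φY ⁻¹' {w}))⁻¹ *
          (μX (s ∩ φX ⁻¹' {z}) * μY (φY ⁻¹' {w}))
      = ∑ w ∈ T, (c z w * (μY (φY ⁻¹' {w}))⁻¹ * μY (φY ⁻¹' {w})) *
          ((μX (φX ⁻¹' {z}))⁻¹ * μX (s ∩ φX ⁻¹' {z})) :=
        Finset.sum_congr rfl fun w _ ↦ by ring
    _ = μX (s ∩ φX ⁻¹' {z}) * (μX (φX ⁻¹' {z}))⁻¹ * μX (φX ⁻¹' {z}) := by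
        simp only [ENNReal.mul_inv_mul_cancel_of_le (hcb z _) (measure_ne_top _ _),
          ← Finset.sum_mul, hrow z hz]
        ring
    _ = μX (φX ⁻¹' {z} ∩ s) := by
        rw [ENNReal.mul_inv_mul_cancel_of_le (measure_mono inter_subset_right)
          (measure_ne_top _ _), inter_comm]

lemma map_snd_gluedMeasure_le (hφX : Measurable φX) (hφY : Measurable φY) (hT : range φY ⊆ T)
    (hcol : ∀ w ∈ T, ∑ z ∈ S, c z w ≤ μY (φY ⁻¹' {w}))
    (hca : ∀ z w, c z w ≤ μX (φX ⁻¹' {z})) :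
    (gluedMeasure μX μY φX φY S T c).map Prod.snd ≤ μY := by
  refine Measure.le_iff.2 fun t ht ↦ ?_
  rw [Measure.map_apply measurable_snd ht, ← univ_prod, gluedMeasure_apply_prod hφX hφY,
    Finset.sum_comm, ← sum_measure_inter_preimage_singleton_of_range_subset μY hφY hT t]
  refine Finset.sum_le_sum fun w hw ↦ ?_
  simp only [univ_inter]
  calc ∑ z ∈ S, c z w * (μX (φX ⁻¹' {z}))⁻¹ * (μY (φY ⁻¹' {w}))⁻¹ *
          (μX (φX ⁻¹' {z}) * μY (t ∩ φY ⁻¹' {w}))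
      = ∑ z ∈ S, (c z w * (μX (φX ⁻¹' {z}))⁻¹ * μX (φX ⁻¹' {z})) *
          ((μY (φY ⁻¹' {w}))⁻¹ * μY (t ∩ φY ⁻¹' {w})) :=
        Finset.sum_congr rfl fun z _ ↦ by ring
    _ = (∑ z ∈ S, c z w) * (μY (φY ⁻¹' {w}))⁻¹ * μY (t ∩ φY ⁻¹' {w}) := by
        simp only [ENNReal.mul_inv_mul_cancel_of_le (hca _ w) (measure_ne_top _ _),
          ← Finset.sum_mul, mul_assoc]
    _ ≤ μY (φY ⁻¹' {w}) * (μY (φY ⁻¹' {w}))⁻¹ * μY (t ∩ φY ⁻¹' {w}) := by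
        gcongr
        exact hcol w hw
    _ ≤ μY (φY ⁻¹' {w} ∩ t) := by
        rw [inter_comm]
        exact mul_le_of_le_one_left' (ENNReal.mul_inv_le_one _)

lemma lintegral_gluedMeasure (hφX : Measurable φX) (hφY : Measurable φY)
    (hca : ∀ z w, c z w ≤ μX (φX ⁻¹' {z})) (hcb : ∀ z w, c z w ≤ μY (φY ⁻¹' {w}))
    (g : Z → Z → ℝ≥0∞) :
    ∫⁻ p, g (φX p.1) (φY p.2) ∂(gluedMeasure μX μY φX φY S T c) =
      ∑ z ∈ S, ∑ w ∈ T, g z w * c z w := by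
  simp only [gluedMeasure, lintegral_finsetSum_measure, lintegral_smul_measure]
  refine Finset.sum_congr rfl fun z _ ↦ Finset.sum_congr rfl fun w _ ↦ ?_
  have hA := hφX (measurableSet_singleton z)
  have hB := hφY (measurableSet_singleton w)
  rw [Measure.prod_restrict, setLIntegral_congr_fun (hA.prod hB) (g := fun _ ↦ g z w)
    fun p hp ↦ by rw [show φX p.1 = z from hp.1, show φY p.2 = w from hp.2],
    setLIntegral_const, Measure.prod_prod]
  calc c z w * (μX (φX ⁻¹' {z}))⁻¹ * (μY (φY ⁻¹' {w}))⁻¹ *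
        (g z w * (μX (φX ⁻¹' {z}) * μY (φY ⁻¹' {w})))
      = g z w * ((c z w * (μX (φX ⁻¹' {z}))⁻¹ * μX (φX ⁻¹' {z})) *
          (μY (φY ⁻¹' {w}))⁻¹ * μY (φY ⁻¹' {w})) := by ring
    _ = g z w * c z w := by
        rw [ENNReal.mul_inv_mul_cancel_of_le (hca z w) (measure_ne_top _ _),
          ENNReal.mul_inv_mul_cancel_of_le (hcb z w) (measure_ne_top _ _)]

end Gluing

theorem exists_coupling_lintegral_le_of_map {X Y Z : Type*} [MeasurableSpace X]
    [MeasurableSpace Y] [MeasurableSpace Z] [MeasurableSingletonClass Z] {μX : Measure X}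
    {μY : Measure Y} [IsFiniteMeasure μX] [IsFiniteMeasure μY] {φX : X → Z} {φY : Y → Z}
    (hφX : Measurable φX) (hφY : Measurable φY) (hX : (range φX).Finite) (hY : (range φY).Finite)
    {γ : Measure (Z × Z)} (hγX : γ.map Prod.fst = μX.map φX) (hγY : γ.map Prod.snd ≤ μY.map φY)
    (g : Z → Z → ℝ≥0∞) :
    ∃ γ' : Measure (X × Y), γ'.map Prod.fst = μX ∧ γ'.map Prod.snd ≤ μY ∧
      ∫⁻ p, g (φX p.1) (φY p.2) ∂γ' ≤ ∫⁻ q, g q.1 q.2 ∂γ := by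
  set S := hX.toFinset
  set T := hY.toFinset
  have hS : range φX ⊆ S := hX.coe_toFinset.ge
  have hT : range φY ⊆ T := hY.coe_toFinset.ge
  have hfst (z : Z) : γ (Prod.fst ⁻¹' {z}) = μX (φX ⁻¹' {z}) := by
    rw [← Measure.map_apply measurable_fst (measurableSet_singleton z), hγX,
      Measure.map_apply hφX (measurableSet_singleton z)]
  have hsnd (t : Set Z) (ht : MeasurableSet t) : γ (Prod.snd ⁻¹' t) ≤ μY (φY ⁻¹' t) := by
    rw [← Measure.map_apply measurable_snd ht, ← Measure.map_apply hφY ht]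
    exact Measure.le_iff'.1 hγY t
  have hpoint (z w : Z) : γ {(z, w)} = γ (Prod.fst ⁻¹' {z} ∩ Prod.snd ⁻¹' {w}) := by
    rw [← prod_eq, singleton_prod_singleton]
  have hca (z w : Z) : γ {(z, w)} ≤ μX (φX ⁻¹' {z}) :=
    ((hpoint z w).trans_le (measure_mono inter_subset_left)).trans_eq (hfst z)
  have hcb (z w : Z) : γ {(z, w)} ≤ μY (φY ⁻¹' {w}) :=
    ((hpoint z w).trans_le (measure_mono inter_subset_right)).trans
      (hsnd _ (measurableSet_singleton w))
  have hrow (z : Z) (_ : z ∈ S) : ∑ w ∈ T, γ {(z, w)} = μX (φX ⁻¹' {z}) := by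
    have hTnull : γ (Prod.snd ⁻¹' (T : Set Z))ᶜ = 0 := by
      refine nonpos_iff_eq_zero.1 ((hsnd _ T.measurableSet.compl).trans_eq ?_)
      rw [preimage_compl, preimage_eq_univ_iff.2 hT, compl_univ, measure_empty]
    simp only [hpoint, inter_comm (Prod.fst ⁻¹' {z})]
    rw [sum_measure_inter_preimage_singleton γ measurable_snd, inter_comm,
      measure_inter_conull hTnull, hfst]
  have hcol (w : Z) (_ : w ∈ T) : ∑ z ∈ S, γ {(z, w)} ≤ μY (φY ⁻¹' {w}) := by
    simp only [hpoint]
    rw [sum_measure_inter_preimage_singleton γ measurable_fst]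
    exact (measure_mono inter_subset_right).trans (hsnd _ (measurableSet_singleton w))
  refine ⟨gluedMeasure μX μY φX φY S T fun z w ↦ γ {(z, w)},
    map_fst_gluedMeasure hφX hφY hS hrow hcb, map_snd_gluedMeasure_le hφX hφY hT hcol hca, ?_⟩
  rw [lintegral_gluedMeasure hφX hφY hca hcb,
    ← Finset.sum_product' (f := fun z w ↦ g z w * γ {(z, w)}), ← lintegral_finset]
  exact setLIntegral_le_lintegral _ _

theorem uot_map_eq_inf_couplings_general {X Y Z : Type*}
    [Fintype X] [Fintype Y]
    [MetricSpace Z]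
    [MeasurableSpace X] [MeasurableSpace Y] [MeasurableSpace Z] [BorelSpace Z]
    (φX : X → Z) (φY : Y → Z) (hφX : Measurable φX) (hφY : Measurable φY)
    (μX : Measure X) (μY : Measure Y)
    (hμX : μX Set.univ ≤ 1) (hμY : μY Set.univ ≤ 1)
    (hm : μX Set.univ ≤ μY Set.univ) :
    UOTe dist (μX.map φX) (μY.map φY) =
      (⨅ γ ∈ {γ : Measure (X × Y) | γ.map Prod.fst = μX ∧ γ.map Prod.snd ≤ μY},
        ∫⁻ q, ENNReal.ofReal (dist (φX q.1) (φY q.2)) ∂γ)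
      + ((μX Set.univ - μY Set.univ) + (μY Set.univ - μX Set.univ)) := by
  have : IsFiniteMeasure μX := ⟨hμX.trans_lt ENNReal.one_lt_top⟩
  have : IsFiniteMeasure μY := ⟨hμY.trans_lt ENNReal.one_lt_top⟩
  rw [UOTe, Measure.map_apply hφX .univ, Measure.map_apply hφY .univ, preimage_univ,
    preimage_univ, if_pos hm]
  congr 1
  refine le_antisymm (le_iInf₂ fun γ hγ ↦ ?_) (le_iInf₂ fun γ hγ ↦ ?_)
  · refine iInf₂_le_of_le (γ.map (Prod.map φX φY)) ⟨?_, ?_⟩ (lintegral_map_le _ _)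
    · rw [Measure.map_fst_map_prodMap hφX hφY, hγ.1]
    · rw [Measure.map_snd_map_prodMap hφX hφY]
      exact Measure.map_mono hγ.2 hφY
  · obtain ⟨γ', hγ'X, hγ'Y, hcost⟩ := exists_coupling_lintegral_le_of_map hφX hφY
      (finite_range φX) (finite_range φY) hγ.1 hγ.2 fun z w ↦ ENNReal.ofReal (dist z w)
    exact iInf₂_le_of_le γ' ⟨hγ'X, hγ'Y⟩ hcost

/-- Optimal transport between pushforwards: for finite metric spaces `X`, `Y`, a complete
separable metric space `Z`, measurable `φ_X : X → Z`, `φ_Y : Y → Z` and sub-probability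
measures `μ_X`, `μ_Y` with `‖μ_X‖ ≤ ‖μ_Y‖`, the unbalanced OT distance between the
pushforwards equals the infimum over couplings `γ ∈ Γ(μ_X, μ_Y)` of
`∫ d_Z(φ_X x, φ_Y y) dγ` plus the mass-difference term. -/
theorem uot_map_eq_inf_couplings {X Y Z : Type*}
    [MetricSpace X] [Fintype X] [MetricSpace Y] [Fintype Y]
    [MetricSpace Z] [CompleteSpace Z] [TopologicalSpace.SeparableSpace Z]
    [MeasurableSpace X] [MeasurableSpace Y] [MeasurableSpace Z] [BorelSpace Z]
    (φX : X → Z) (φY : Y → Z) (hφX : Measurable φX) (hφY : Measurable φY)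
    (μX : Measure X) (μY : Measure Y)
    (hμX : μX Set.univ ≤ 1) (hμY : μY Set.univ ≤ 1)
    (hm : μX Set.univ ≤ μY Set.univ) :
    UOTe dist (μX.map φX) (μY.map φY) =
      (⨅ γ ∈ {γ : Measure (X × Y) | γ.map Prod.fst = μX ∧ γ.map Prod.snd ≤ μY},
        ∫⁻ q, ENNReal.ofReal (dist (φX q.1) (φY q.2)) ∂γ)
      + ((μX Set.univ - μY Set.univ) + (μY Set.univ - μX Set.univ)) :=
  uot_map_eq_inf_couplings_general φX φY hφX hφY μX μY hμX hμY hm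
end

section
/- Let S be a metric space and f: S → ℝⁿ be bounded and Lipschitz. For measures μ, ν ∈ M_{≤1}(S) with ‖ν‖ ≤ ‖μ‖ and any coupling γ ∈ Γ(ν,μ): ‖∫_S f dμ − ∫_S f dν‖₂ ≤ (‖f‖_∞ + Lip(f)) · ((‖μ‖ − ‖ν‖) + ∫_{S×S} d(x,y) dγ(x,y)). -/
open MeasureTheory
open scoped ENNReal NNReal

/-! Let `η` be the second marginal of `γ`, so `η ≤ μ` and `η(S) = γ(S) = ν(S)`. Splitting
`μ = (μ - η) + η` gives `∫ f dμ - ∫ f dν = ∫ f d(μ - η) + ∫ (f y - f x) dγ(x, y)`; the first term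
is at most `‖f‖_∞ (‖μ‖ - ‖ν‖)` and the second at most `Lip(f) ∫ d dγ`. The estimates are carried
out in `ℝ≥0∞`, so the transport cost need not be finite. -/

lemma enorm_integral_le_ofReal_mul_measure_univ {α E : Type*} [MeasurableSpace α]
    [NormedAddCommGroup E] [NormedSpace ℝ E] {f : α → E} {C : ℝ} (hC : ∀ x, ‖f x‖ ≤ C)
    (m : Measure α) : ‖∫ x, f x ∂m‖ₑ ≤ ENNReal.ofReal C * m Set.univ :=
  calc ‖∫ x, f x ∂m‖ₑ ≤ ∫⁻ x, ‖f x‖ₑ ∂m := enorm_integral_le_lintegral_enorm _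
    _ ≤ ∫⁻ _, ENNReal.ofReal C ∂m :=
      lintegral_mono fun x => by rw [← ofReal_norm]; exact ENNReal.ofReal_le_ofReal (hC x)
    _ = ENNReal.ofReal C * m Set.univ := lintegral_const _

namespace LipschitzWith

variable {S E : Type*} [MetricSpace S] [MeasurableSpace S] [OpensMeasurableSpace S]
  [NormedAddCommGroup E] [SecondCountableTopology E] {f : S → E} {C : ℝ} {K : ℝ≥0}

lemma integrable_of_norm_le (hf : LipschitzWith K f) (hC : ∀ x, ‖f x‖ ≤ C)
    (m : Measure S) [IsFiniteMeasure m] : Integrable f m :=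
  .of_bound hf.continuous.aestronglyMeasurable C (ae_of_all _ hC)

variable [NormedSpace ℝ E]

lemma enorm_integral_map_snd_sub_integral_map_fst_le (hf : LipschitzWith K f)
    (hC : ∀ x, ‖f x‖ ≤ C) (γ : Measure (S × S)) [IsFiniteMeasure γ] :
    ‖∫ x, f x ∂(γ.map Prod.snd) - ∫ x, f x ∂(γ.map Prod.fst)‖ₑ ≤
      K * ∫⁻ q, edist q.1 q.2 ∂γ := by
  have hint₁ : Integrable (fun q : S × S => f q.1) γ :=
    (hf.integrable_of_norm_le hC _).comp_measurable measurable_fst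
  have hint₂ : Integrable (fun q : S × S => f q.2) γ :=
    (hf.integrable_of_norm_le hC _).comp_measurable measurable_snd
  rw [integral_map measurable_snd.aemeasurable hf.continuous.aestronglyMeasurable,
    integral_map measurable_fst.aemeasurable hf.continuous.aestronglyMeasurable,
    ← integral_sub hint₂ hint₁, ← lintegral_const_mul' _ _ ENNReal.coe_ne_top]
  calc ‖∫ q, (f q.2 - f q.1) ∂γ‖ₑ ≤ ∫⁻ q, ‖f q.2 - f q.1‖ₑ ∂γ :=
        enorm_integral_le_lintegral_enorm _
    _ ≤ ∫⁻ q, K * edist q.1 q.2 ∂γ := lintegral_mono fun q => by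
        rw [← edist_eq_enorm_sub, edist_comm]
        exact hf.edist_le_mul _ _

theorem enorm_integral_sub_integral_map_fst_le (hf : LipschitzWith K f) (hC : ∀ x, ‖f x‖ ≤ C)
    (μ : Measure S) [IsFiniteMeasure μ] (γ : Measure (S × S)) (hγ : γ.map Prod.snd ≤ μ) :
    ‖∫ x, f x ∂μ - ∫ x, f x ∂(γ.map Prod.fst)‖ₑ ≤
      ENNReal.ofReal C * (μ Set.univ - γ Set.univ) + K * ∫⁻ q, edist q.1 q.2 ∂γ := by
  set η := γ.map Prod.snd
  have : IsFiniteMeasure η := isFiniteMeasure_of_le μ hγ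
  have : IsFiniteMeasure γ := (Measure.isFiniteMeasure_map_iff measurable_snd.aemeasurable).1 this
  have hsplit : ∫ x, f x ∂μ = ∫ x, f x ∂(μ - η) + ∫ x, f x ∂η := by
    rw [← integral_add_measure (hf.integrable_of_norm_le hC _) (hf.integrable_of_norm_le hC _),
      Measure.sub_add_cancel_of_le hγ]
  have hmass : (μ - η) Set.univ = μ Set.univ - γ Set.univ := by
    rw [Measure.sub_apply .univ hγ, Measure.map_apply measurable_snd .univ, Set.preimage_univ]
  rw [hsplit, add_sub_assoc, ← hmass]
  exact (enorm_add_le _ _).trans (add_le_add (enorm_integral_le_ofReal_mul_measure_univ hC _)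
    (hf.enorm_integral_map_snd_sub_integral_map_fst_le hC γ))

end LipschitzWith

theorem integral_diff_le_BL_transport_general {S : Type*} [MetricSpace S] [MeasurableSpace S]
    [BorelSpace S] (n : ℕ)
    (f : S → EuclideanSpace ℝ (Fin n)) (C : ℝ) (K : ℝ≥0)
    (hC : ∀ x, ‖f x‖ ≤ C) (hK : LipschitzWith K f)
    (μ ν : Measure S) (hμ : μ Set.univ ≤ 1)
    (γ : Measure (S × S)) (h1 : γ.map Prod.fst = ν) (h2 : γ.map Prod.snd ≤ μ) :
    ENNReal.ofReal ‖∫ x, f x ∂μ - ∫ x, f x ∂ν‖ ≤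
      ENNReal.ofReal (C + (K : ℝ)) *
        ((μ Set.univ - ν Set.univ) + ∫⁻ q, ENNReal.ofReal (dist q.1 q.2) ∂γ) := by
  rcases isEmpty_or_nonempty S with hS | ⟨⟨x₀⟩⟩
  · simp [Measure.eq_zero_of_isEmpty μ, Measure.eq_zero_of_isEmpty ν]
  have hC₀ : 0 ≤ C := (norm_nonneg _).trans (hC x₀)
  have : IsFiniteMeasure μ := ⟨hμ.trans_lt ENNReal.one_lt_top⟩
  subst h1
  rw [ofReal_norm, Measure.map_apply measurable_fst .univ, Set.preimage_univ, mul_add]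
  simp_rw [← edist_dist]
  refine (hK.enorm_integral_sub_integral_map_fst_le hC μ γ h2).trans ?_
  gcongr
  · linarith [K.coe_nonneg]
  · rw [← ENNReal.ofReal_coe_nnreal]
    exact ENNReal.ofReal_le_ofReal (by linarith)

/-- For a bounded Lipschitz `f : S → ℝⁿ`, measures `ν ≤`-mass `μ` of total mass at most
one and any unbalanced coupling `γ ∈ Γ(ν, μ)`:
`‖∫ f dμ − ∫ f dν‖₂ ≤ (‖f‖_∞ + Lip(f)) · ((‖μ‖ − ‖ν‖) + ∫ d(x,y) dγ)`. -/
theorem integral_diff_le_BL_transport {S : Type*} [MetricSpace S] [MeasurableSpace S]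
    [BorelSpace S] (n : ℕ)
    (f : S → EuclideanSpace ℝ (Fin n)) (C : ℝ) (K : ℝ≥0)
    (hC : ∀ x, ‖f x‖ ≤ C) (hK : LipschitzWith K f)
    (μ ν : Measure S) (hμ : μ Set.univ ≤ 1) (hν : ν Set.univ ≤ 1)
    (hm : ν Set.univ ≤ μ Set.univ)
    (γ : Measure (S × S)) (h1 : γ.map Prod.fst = ν) (h2 : γ.map Prod.snd ≤ μ) :
    ENNReal.ofReal ‖∫ x, f x ∂μ - ∫ x, f x ∂ν‖ ≤
      ENNReal.ofReal (C + (K : ℝ)) *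
        ((μ Set.univ - ν Set.univ) + ∫⁻ q, ENNReal.ofReal (dist q.1 q.2) ∂γ) :=
  integral_diff_le_BL_transport_general n f C K hC hK μ ν hμ γ h1 h2
end
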